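/- For every real r ≥ 1 and every f ∈ L²((0, ∞)), the function g(x) = ∫₀^∞ (2r·t/(1 − t^(2r)) − 2t/(1 − t²))·|f(t·x)| dt (defined for x > 0) satisfies ‖g‖_{L²(0,∞)} ≤ (4√2·r + 8√2/3)·‖f‖_{L²(0,∞)}. -/

import Mathlib

/-!
Write `ψ(y) = y / (1 - e^{-y})` (`todd`). For `t > 0` the kernel equals
`t / (-log t) · (ψ(-2r log t) - ψ(-2 log t))`, and the elementary bounds `1 ≤ ψ(y) ≤ 1 + y`
for `y > 0` and `e^y ≤ ψ(y) ≤ 1` for `y < 0` bound it by `2rt`; for `t > 2` it is also at most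
`2t/(t² - 1) ≤ 8/(3t)`.

An operator `G ↦ ∫₀^∞ k(t) G(t·) dt` is bounded on `L²(0, ∞)` by
`∫₀^∞ k(t) t^{-1/2} dt`: split `k = (k t^{-1/2})^{1/2} (k t^{1/2})^{1/2}` in Cauchy–Schwarz, then integrate in `x` first
(Tonelli), where the dilation `x ↦ tx` contributes the factor `t⁻¹`. For the majorant above the
weighted integral is `(8√2/3) r + 8√2/3`.
-/

open MeasureTheory

open Set Real
open scoped ENNReal

lemma lintegral_Ioi_comp_mul_left (h : ℝ → ℝ≥0∞) {t : ℝ} (ht : 0 < t) :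
    ∫⁻ x in Ioi 0, h (t * x) = ENNReal.ofReal t⁻¹ * ∫⁻ y in Ioi 0, h y := by
  have he := measurableEmbedding_mulLeft₀ ht.ne'
  calc ∫⁻ x in Ioi 0, h (t * x) = ∫⁻ x in (t * ·) ⁻¹' Ioi 0, h (t * x) := by
        rw [preimage_const_mul_Ioi₀ _ ht, zero_div]
    _ = ∫⁻ y in Ioi 0, h y ∂(Measure.map (t * ·) volume) := by
        rw [he.restrict_map, he.lintegral_map]
    _ = ENNReal.ofReal t⁻¹ * ∫⁻ y in Ioi 0, h y := by
        rw [Real.map_volume_mul_left ht.ne', Measure.restrict_smul, lintegral_smul_measure,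
          abs_of_pos (inv_pos.2 ht), smul_eq_mul]

lemma ae_restrict_Ioi_comp_mul_right {p : ℝ → Prop}
    (h : ∀ᵐ y ∂volume.restrict (Ioi 0), p y) {x : ℝ} (hx : 0 < x) : ∀ᵐ t ∂volume.restrict (Ioi 0), p (t * x) := by
  rw [ae_restrict_iff' measurableSet_Ioi] at h ⊢
  filter_upwards [(Measure.quasiMeasurePreserving_smul volume hx.ne').ae h] with t ht ht0
  simpa [mul_comm] using ht (mul_pos hx ht0)

lemma eLpNorm_two_eq_lintegral {α : Type*} [MeasurableSpace α] {μ : Measure α}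
    (G : α → ℝ≥0∞) :
    eLpNorm G 2 μ = (∫⁻ a, G a ^ (2 : ℝ) ∂μ) ^ (1 / 2 : ℝ) := by
  simpa using eLpNorm_nnreal_eq_lintegral (f := G) (μ := μ) (p := 2) two_ne_zero

noncomputable def dilationIntegral (k G : ℝ → ℝ≥0∞) (x : ℝ) : ℝ≥0∞ :=
  ∫⁻ t in Ioi 0, k t * G (t * x)

section Dilation

variable {k G : ℝ → ℝ≥0∞}

lemma dilationIntegral_congr_ae {G' : ℝ → ℝ≥0∞} (h : G =ᵐ[volume.restrict (Ioi 0)] G')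
    {x : ℝ} (hx : 0 < x) : dilationIntegral k G x = dilationIntegral k G' x :=
  lintegral_congr_ae <|
    (ae_restrict_Ioi_comp_mul_right h hx).mono fun t ht => congrArg (k t * ·) ht

lemma dilationIntegral_rpow_two_le (hk : Measurable k) (hG : Measurable G) (x : ℝ) :
    dilationIntegral k G x ^ (2 : ℝ)
      ≤ (∫⁻ t in Ioi 0, k t * ENNReal.ofReal (t ^ (-(1 / 2) : ℝ)))
        * dilationIntegral (fun t => k t * ENNReal.ofReal (t ^ (1 / 2 : ℝ)))
            (fun y => G y ^ (2 : ℝ)) x := by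
  set u : ℝ → ℝ≥0∞ := fun t => k t * ENNReal.ofReal (t ^ (-(1 / 2) : ℝ))
  set v : ℝ → ℝ≥0∞ := fun t => k t * ENNReal.ofReal (t ^ (1 / 2 : ℝ))
  have hsplit : ∀ t ∈ Ioi (0 : ℝ),
      k t * G (t * x) = u t ^ (1 / 2 : ℝ) * (v t ^ (1 / 2 : ℝ) * G (t * x)) := fun t ht => by
    have huv : u t * v t = k t ^ (2 : ℝ) := by
      rw [mul_mul_mul_comm, ← ENNReal.ofReal_mul (rpow_nonneg (le_of_lt ht) _),
        ← rpow_add ht]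
      norm_num [sq]
    rw [← mul_assoc, ← ENNReal.mul_rpow_of_nonneg _ _ (by norm_num), huv, ← ENNReal.rpow_mul]
    norm_num
  calc _ = (∫⁻ t in Ioi 0, u t ^ (1 / 2 : ℝ) * (v t ^ (1 / 2 : ℝ) * G (t * x))) ^ (2 : ℝ) := by
        rw [dilationIntegral, setLIntegral_congr_fun measurableSet_Ioi hsplit]
    _ ≤ ((∫⁻ t in Ioi 0, (u t ^ (1 / 2 : ℝ)) ^ (2 : ℝ)) ^ (1 / 2 : ℝ)
          * (∫⁻ t in Ioi 0, (v t ^ (1 / 2 : ℝ) * G (t * x)) ^ (2 : ℝ)) ^ (1 / 2 : ℝ))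
          ^ (2 : ℝ) := by
        gcongr
        exact ENNReal.lintegral_mul_le_Lp_mul_Lq _ .two_two (by fun_prop) (by fun_prop)
    _ = (∫⁻ t in Ioi 0, u t) * ∫⁻ t in Ioi 0, v t * G (t * x) ^ (2 : ℝ) := by
        simp only [ENNReal.mul_rpow_of_nonneg _ _ zero_le_two, ← ENNReal.rpow_mul]
        norm_num

lemma lintegral_dilationIntegral (hk : Measurable k) (hG : Measurable G) :
    ∫⁻ x in Ioi 0, dilationIntegral k G x
      = (∫⁻ t in Ioi 0, k t * ENNReal.ofReal t⁻¹) * ∫⁻ y in Ioi 0, G y := by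
  unfold dilationIntegral
  rw [lintegral_lintegral_swap (by fun_prop),
    ← lintegral_mul_const _ (by fun_prop)]
  refine setLIntegral_congr_fun measurableSet_Ioi fun t ht => ?_
  rw [lintegral_const_mul _ (by fun_prop), lintegral_Ioi_comp_mul_left G ht, mul_assoc]

lemma eLpNorm_dilationIntegral_le_of_measurable (hk : Measurable k) (hG : Measurable G) :
    eLpNorm (dilationIntegral k G) 2 (volume.restrict (Ioi 0))
      ≤ (∫⁻ t in Ioi 0, k t * ENNReal.ofReal (t ^ (-(1 / 2) : ℝ)))
        * eLpNorm G 2 (volume.restrict (Ioi 0)) := by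
  set A := ∫⁻ t in Ioi 0, k t * ENNReal.ofReal (t ^ (-(1 / 2) : ℝ))
  set k' : ℝ → ℝ≥0∞ := fun t => k t * ENNReal.ofReal (t ^ (1 / 2 : ℝ))
  have hk' : ∫⁻ t in Ioi 0, k' t * ENNReal.ofReal t⁻¹ = A := by
    refine setLIntegral_congr_fun measurableSet_Ioi fun t (ht : 0 < t) => ?_
    rw [mul_assoc, ← ENNReal.ofReal_mul (rpow_nonneg ht.le _), ← rpow_neg_one, ← rpow_add ht]
    norm_num
  rw [eLpNorm_two_eq_lintegral, eLpNorm_two_eq_lintegral]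
  calc _ ≤ (∫⁻ x in Ioi 0, A * dilationIntegral k' (fun y => G y ^ (2 : ℝ)) x) ^ (1 / 2 : ℝ) := by
        gcongr with x
        exact dilationIntegral_rpow_two_le hk hG x
    _ = (A * (A * ∫⁻ y in Ioi 0, G y ^ (2 : ℝ))) ^ (1 / 2 : ℝ) := by
        rw [lintegral_const_mul _ (by unfold dilationIntegral; fun_prop),
          lintegral_dilationIntegral (by fun_prop) (by fun_prop), hk']
    _ = A * (∫⁻ y in Ioi 0, G y ^ (2 : ℝ)) ^ (1 / 2 : ℝ) := by
        rw [← mul_assoc, ← sq, ENNReal.mul_rpow_of_nonneg _ _ (by norm_num),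
          ← ENNReal.rpow_two, ← ENNReal.rpow_mul]
        norm_num

theorem eLpNorm_dilationIntegral_le (hk : Measurable k)
    (hG : AEMeasurable G (volume.restrict (Ioi 0))) :
    eLpNorm (dilationIntegral k G) 2 (volume.restrict (Ioi 0))
      ≤ (∫⁻ t in Ioi 0, k t * ENNReal.ofReal (t ^ (-(1 / 2) : ℝ)))
        * eLpNorm G 2 (volume.restrict (Ioi 0)) := by
  have hmk : dilationIntegral k G =ᵐ[volume.restrict (Ioi 0)] dilationIntegral k (hG.mk G) :=
    (ae_restrict_iff' measurableSet_Ioi).2 <| .of_forall fun x hx =>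
      dilationIntegral_congr_ae hG.ae_eq_mk hx
  rw [eLpNorm_congr_ae hmk, eLpNorm_congr_ae hG.ae_eq_mk]
  exact eLpNorm_dilationIntegral_le_of_measurable hk hG.measurable_mk

end Dilation

noncomputable def todd (y : ℝ) : ℝ := y / (1 - exp (-y))

lemma one_le_todd {y : ℝ} (hy : 0 < y) : 1 ≤ todd y := by
  have hD : 0 < 1 - exp (-y) := by simpa using exp_lt_one_iff.2 (neg_neg_of_pos hy)
  rw [todd, le_div_iff₀ hD]
  linarith [add_one_le_exp (-y)]

lemma todd_le_one_add {y : ℝ} (hy : 0 < y) : todd y ≤ 1 + y := by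
  have hD : 0 < 1 - exp (-y) := by simpa using exp_lt_one_iff.2 (neg_neg_of_pos hy)
  have h : (1 + y) * exp (-y) ≤ 1 := by
    calc (1 + y) * exp (-y) ≤ exp y * exp (-y) := by gcongr; linarith [add_one_le_exp y]
      _ = 1 := by rw [← exp_add, add_neg_cancel, exp_zero]
  rw [todd, div_le_iff₀ hD]
  linarith

lemma exp_le_todd {y : ℝ} (hy : y < 0) : exp y ≤ todd y := by
  have hD : 1 - exp (-y) < 0 := by simpa using one_lt_exp_iff.2 (neg_pos.2 hy)
  have h : exp y * exp (-y) = 1 := by rw [← exp_add, add_neg_cancel, exp_zero]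
  rw [todd, le_div_iff_of_neg hD]
  nlinarith [add_one_le_exp y]

lemma todd_le_one {y : ℝ} (hy : y < 0) : todd y ≤ 1 := by
  have hD : 1 - exp (-y) < 0 := by simpa using one_lt_exp_iff.2 (neg_pos.2 hy)
  rw [todd, div_le_iff_of_neg hD]
  linarith [add_one_le_exp (-y)]

lemma mul_div_one_sub_rpow_eq_todd (c : ℝ) {t : ℝ} (ht : 0 < t) :
    2 * c * t / (1 - t ^ (2 * c)) = t / -log t * todd (-(2 * c * log t)) := by
  rcases eq_or_ne (log t) 0 with hL | hL
  -- at `t = 1` both sides vanish through division by zero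
  · simp [rpow_def_of_pos ht, hL]
  rw [todd, mul_div_assoc', rpow_def_of_pos ht, neg_neg]
  congr 1
  field_simp
  ring_nf

noncomputable def secondDerivKernel (r t : ℝ) : ℝ :=
  2 * r * t / (1 - t ^ (2 * r)) - 2 * t / (1 - t ^ 2)

lemma secondDerivKernel_eq_todd (r : ℝ) {t : ℝ} (ht : 0 < t) :
    secondDerivKernel r t
      = t / -log t * (todd (-(2 * r * log t)) - todd (-(2 * log t))) := by
  have h2 : 2 * t / (1 - t ^ 2) = 2 * 1 * t / (1 - t ^ (2 * 1 : ℝ)) := by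
    norm_num [rpow_two]
  rw [secondDerivKernel, h2, mul_div_one_sub_rpow_eq_todd r ht,
    mul_div_one_sub_rpow_eq_todd 1 ht, mul_one, mul_sub]

lemma secondDerivKernel_le_two_mul_mul {r t : ℝ} (hr : 0 < r) (ht : 0 < t) :
    secondDerivKernel r t ≤ 2 * r * t := by
  rw [secondDerivKernel_eq_todd r ht]
  set L := log t
  have hid : L ≠ 0 → t / -L * -(2 * r * L) = 2 * r * t := fun hL => by
    field_simp
  rcases lt_trichotomy L 0 with hL | hL | hL
  · calc _ ≤ t / -L * -(2 * r * L) := by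
          gcongr
          · exact div_nonneg ht.le (neg_nonneg.2 hL.le)
          · linarith [todd_le_one_add (y := -(2 * r * L)) (by nlinarith),
              one_le_todd (y := -(2 * L)) (by linarith)]
      _ = 2 * r * t := hid hL.ne
  · rw [hL, neg_zero, div_zero, zero_mul]
    positivity
  · calc _ ≤ t / -L * -(2 * r * L) := by
          apply mul_le_mul_of_nonpos_left _ (div_nonpos_of_nonneg_of_nonpos ht.le (by linarith))
          linarith [exp_le_todd (y := -(2 * r * L)) (by nlinarith),
            todd_le_one (y := -(2 * L)) (by linarith), add_one_le_exp (-(2 * r * L))]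
      _ = 2 * r * t := hid hL.ne'

lemma secondDerivKernel_le_of_two_lt {r t : ℝ} (hr : 0 < r) (ht : 2 < t) :
    secondDerivKernel r t ≤ 8 / 3 * t⁻¹ := by
  have hpow : 1 < t ^ (2 * r) := one_lt_rpow (by linarith) (by positivity)
  have h1 : 2 * r * t / (1 - t ^ (2 * r)) ≤ 0 :=
    div_nonpos_of_nonneg_of_nonpos (by positivity) (by linarith)
  have h2 : -(2 * t / (1 - t ^ 2)) ≤ 8 / 3 * t⁻¹ := by
    rw [← div_neg, neg_sub, ← div_eq_mul_inv, div_le_div_iff₀ (by nlinarith) (by linarith)]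
    nlinarith
  rw [secondDerivKernel]
  linarith

lemma setLIntegral_Ioc_zero_rpow_half :
    ∫⁻ t in Ioc 0 2, ENNReal.ofReal (t ^ (1 / 2 : ℝ)) = ENNReal.ofReal (4 * √2 / 3) := by
  rw [← ofReal_integral_eq_lintegral_ofReal
      ((intervalIntegrable_iff_integrableOn_Ioc_of_le zero_le_two).1
        (intervalIntegral.intervalIntegrable_rpow' (by norm_num)))
      ((ae_restrict_iff' measurableSet_Ioc).2 (.of_forall fun t ht => rpow_nonneg ht.1.le _)),
    ← intervalIntegral.integral_of_le zero_le_two, integral_rpow (Or.inl (by norm_num)),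
    zero_rpow (by norm_num), show (1 / 2 : ℝ) + 1 = 1 + 1 / 2 by norm_num,
    rpow_add two_pos, rpow_one, ← sqrt_eq_rpow]
  congr 1
  ring

lemma setLIntegral_Ioi_two_rpow_neg_three_halves :
    ∫⁻ t in Ioi 2, ENNReal.ofReal (t ^ (-(3 / 2) : ℝ)) = ENNReal.ofReal √2 := by
  rw [← ofReal_integral_eq_lintegral_ofReal (integrableOn_Ioi_rpow_of_lt (by norm_num) two_pos)
      ((ae_restrict_iff' measurableSet_Ioi).2 (.of_forall fun t ht =>
        rpow_nonneg (two_pos.trans ht).le _)),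
    integral_Ioi_rpow_of_lt (by norm_num) two_pos,
    show -(3 / 2 : ℝ) + 1 = -(1 / 2) by norm_num, rpow_neg two_pos.le, ← sqrt_eq_rpow]
  congr 1
  field_simp
  norm_num

lemma lintegral_secondDerivKernel_mul_rpow_le {r : ℝ} (hr : 0 < r) :
    ∫⁻ t in Ioi 0,
        ENNReal.ofReal (secondDerivKernel r t) * ENNReal.ofReal (t ^ (-(1 / 2) : ℝ))
      ≤ ENNReal.ofReal (4 * √2 * r + 8 * √2 / 3) := by
  rw [← Ioc_union_Ioi_eq_Ioi zero_le_two, lintegral_union measurableSet_Ioi Ioc_disjoint_Ioi_same]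
  calc _ ≤ (∫⁻ t in Ioc 0 2, ENNReal.ofReal (2 * r) * ENNReal.ofReal (t ^ (1 / 2 : ℝ)))
        + ∫⁻ t in Ioi 2, ENNReal.ofReal (8 / 3) * ENNReal.ofReal (t ^ (-(3 / 2) : ℝ)) := by
        gcongr ?_ + ?_
        · refine setLIntegral_mono' measurableSet_Ioc fun t ht => ?_
          have ht0 : 0 < t := ht.1
          rw [← ENNReal.ofReal_mul' (rpow_nonneg ht0.le _),
            ← ENNReal.ofReal_mul (by positivity)]
          refine ENNReal.ofReal_le_ofReal ?_
          calc secondDerivKernel r t * t ^ (-(1 / 2) : ℝ)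
              ≤ 2 * r * t * t ^ (-(1 / 2) : ℝ) := by
                gcongr; exact secondDerivKernel_le_two_mul_mul hr ht0
            _ = 2 * r * t ^ (1 / 2 : ℝ) := by
                rw [mul_assoc, ← rpow_one_add' ht0.le (by norm_num)]; norm_num
        · refine setLIntegral_mono' measurableSet_Ioi fun t ht => ?_
          have ht0 : 0 < t := two_pos.trans ht
          rw [← ENNReal.ofReal_mul' (rpow_nonneg ht0.le _),
            ← ENNReal.ofReal_mul (by positivity)]
          refine ENNReal.ofReal_le_ofReal ?_
          calc secondDerivKernel r t * t ^ (-(1 / 2) : ℝ)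
              ≤ 8 / 3 * t⁻¹ * t ^ (-(1 / 2) : ℝ) := by
                gcongr; exact secondDerivKernel_le_of_two_lt hr ht
            _ = 8 / 3 * t ^ (-(3 / 2) : ℝ) := by
                rw [mul_assoc, ← rpow_neg_one, ← rpow_add ht0]; norm_num
    _ = ENNReal.ofReal (2 * r) * ENNReal.ofReal (4 * √2 / 3)
        + ENNReal.ofReal (8 / 3) * ENNReal.ofReal √2 := by
        simp only [lintegral_const_mul' _ _ ENNReal.ofReal_ne_top]
        rw [setLIntegral_Ioc_zero_rpow_half, setLIntegral_Ioi_two_rpow_neg_three_halves]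
    _ ≤ ENNReal.ofReal (4 * √2 * r + 8 * √2 / 3) := by
        rw [← ENNReal.ofReal_mul (by positivity), ← ENNReal.ofReal_mul (by positivity),
          ← ENNReal.ofReal_add (by positivity) (by positivity)]
        refine ENNReal.ofReal_le_ofReal ?_
        nlinarith [sqrt_nonneg 2]

/-- Key `L²` estimate for the second-derivative kernel: for all `r ≥ 1` and
`f ∈ L²((0,∞))`, the function
`g(x) = ∫₀^∞ (2r·t/(1−t^(2r)) − 2t/(1−t²))·|f(tx)| dt` satisfies
`‖g‖_{L²(0,∞)} ≤ (4√2·r + 8√2/3)·‖f‖_{L²(0,∞)}` (interpreted in `[0,∞]`). -/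
theorem Hr_second_deriv_L2_bound (r : ℝ) (hr : 1 ≤ r) (f : ℝ → ℝ)
    (hf : MemLp f 2 (volume.restrict (Set.Ioi 0))) :
    (∫⁻ x in Set.Ioi (0 : ℝ),
        (∫⁻ t in Set.Ioi (0 : ℝ),
          ENNReal.ofReal
            ((2 * r * t / (1 - t ^ (2 * r)) - 2 * t / (1 - t ^ 2)) * |f (t * x)|)) ^ (2 : ℝ))
        ^ (1/2 : ℝ)
      ≤ ENNReal.ofReal (4 * Real.sqrt 2 * r + 8 * Real.sqrt 2 / 3) *
          eLpNorm f 2 (volume.restrict (Set.Ioi 0)) := by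
  have hr0 : 0 < r := one_pos.trans_le hr
  calc _ = eLpNorm
          (dilationIntegral (fun t => ENNReal.ofReal (secondDerivKernel r t)) (‖f ·‖ₑ))
          2 (volume.restrict (Ioi 0)) := by
        simp only [eLpNorm_two_eq_lintegral, dilationIntegral, secondDerivKernel,
          ENNReal.ofReal_mul' (abs_nonneg _), Real.enorm_eq_ofReal_abs]
    _ ≤ (∫⁻ t in Ioi 0, ENNReal.ofReal (secondDerivKernel r t)
          * ENNReal.ofReal (t ^ (-(1 / 2) : ℝ)))
          * eLpNorm (‖f ·‖ₑ) 2 (volume.restrict (Ioi 0)) :=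
        eLpNorm_dilationIntegral_le (by unfold secondDerivKernel; fun_prop) hf.1.enorm
    _ ≤ _ := by
        rw [eLpNorm_enorm]
        gcongr
        exact lintegral_secondDerivKernel_mul_rpow_le hr0
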